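/- arXiv:1705.05349 — 4 statements merged into one kernel-verified Lean document; each statement's English description precedes it below -/
import Mathlib

section
/- Let F ∈ ℂ[s_1,…,s_n]. If for every w ∈ Z(p) there exist an open neighborhood V of w and functions g_1,…,g_n analytic on V such that F(s) = Σ_{j=1}^n g_j(s) p_j(s) for all s ∈ V, then F belongs to the ideal generated by p_1,…,p_n in ℂ[s_1,…,s_n]. -/
/-- Partial derivative operator in direction `j`. -/
noncomputable def pdOp {n : ℕ} (j : Fin n) (f : (Fin n → ℂ) → ℂ) : (Fin n → ℂ) → ℂ :=
  fun x => fderiv ℂ f x (Pi.single j 1)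

/-- Mixed partial derivative `∂^ℓ f`. -/
noncomputable def mixedPartial {n : ℕ} (ℓ : Fin n → ℕ) (f : (Fin n → ℂ) → ℂ) :
    (Fin n → ℂ) → ℂ :=
  (List.finRange n).foldr (fun j g => (pdOp j)^[ℓ j] g) f

/-- `g` belongs locally to the ideal generated by `p 1, …, p n` in `H(U)`. -/
def MemLocalIdeal {n : ℕ} (U : Set (Fin n → ℂ)) (p : Fin n → MvPolynomial (Fin n) ℂ)
    (g : (Fin n → ℂ) → ℂ) : Prop :=
  ∀ w ∈ U, ∃ V : Set (Fin n → ℂ), IsOpen V ∧ V ⊆ U ∧ w ∈ V ∧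
    ∃ q : Fin n → ((Fin n → ℂ) → ℂ), (∀ j, AnalyticOnNhd ℂ (q j) V) ∧
      ∀ s ∈ V, g s = ∑ j, q j s * MvPolynomial.eval s (p j)

/-!
At a common zero `w`, truncating the Taylor series of the local coefficients `g j` at
order `N` gives polynomials `T j` with `F - ∑ T j * p j = O(‖s - w‖ ^ N)` near `w`, and a
polynomial with that decay lies in `𝔪_w ^ N`, where `𝔪_w` is the maximal ideal of `w` (compare
homogeneous components along lines through `w`). Hence `F ∈ I ⊔ 𝔪_w ^ N` for every `w ∈ Z`, where
`I` is the ideal generated by the `p j`. The ideals `I ⊔ 𝔪_w ^ N` are pairwise coprime, so their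
intersection is their product, which lies in `I ⊔ (∏ 𝔪_w) ^ N`. By the Nullstellensatz
`∏ 𝔪_w ≤ √I`, and for `N` large `√I ^ N ≤ I`.
-/

open Filter Topology Asymptotics

theorem Ideal.prod_sup_le_sup_prod {R ι : Type*} [CommSemiring R] (I : Ideal R) (s : Finset ι)
    (A : ι → Ideal R) : ∏ i ∈ s, (I ⊔ A i) ≤ I ⊔ ∏ i ∈ s, A i := by
  induction s using Finset.cons_induction with
  | empty => simp
  | cons a s _ ih =>
    rw [Finset.prod_cons, Finset.prod_cons]
    calc (I ⊔ A a) * ∏ i ∈ s, (I ⊔ A i) ≤ (I ⊔ A a) * (I ⊔ ∏ i ∈ s, A i) :=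
          Ideal.mul_mono_right ih
      _ ≤ I ⊔ A a * ∏ i ∈ s, A i := by
        rw [Ideal.sup_mul, Ideal.mul_sup, Ideal.mul_sup]
        exact sup_le (sup_le (Ideal.mul_le_left.trans le_sup_left)
          (Ideal.mul_le_left.trans le_sup_left)) (sup_le_sup_right Ideal.mul_le_right _)

open Function in
theorem Ideal.mem_of_forall_mem_sup_pow {R ι : Type*} [CommSemiring R] {I : Ideal R}
    {s : Finset ι} {M : ι → Ideal R} (hM : (s : Set ι).Pairwise (IsCoprime on M)) {N : ℕ}
    (hN : (∏ i ∈ s, M i) ^ N ≤ I) {x : R} (hx : ∀ i ∈ s, x ∈ I ⊔ M i ^ N) : x ∈ I := by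
  have hcop : (s : Set ι).Pairwise (IsCoprime on fun i => I ⊔ M i ^ N) := fun i hi j hj hij =>
    Ideal.isCoprime_iff_codisjoint.2 <|
      ((hM hi hj hij).pow).codisjoint.mono le_sup_right le_sup_right
  have hmem : x ∈ ∏ i ∈ s, (I ⊔ M i ^ N) := by
    rw [Ideal.prod_eq_iInf_of_pairwise_isCoprime hcop]
    simpa only [Submodule.mem_iInf] using hx
  refine (Ideal.prod_sup_le_sup_prod I s _).trans (sup_le le_rfl ?_) hmem
  rwa [Finset.prod_pow]

namespace MvPolynomial

section Translation

variable {σ R : Type*}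

theorem eval_aeval [CommSemiring R] (f : σ → MvPolynomial σ R) (s : σ → R)
    (P : MvPolynomial σ R) :
    eval s (aeval f P) = eval (fun i => eval s (f i)) P := by
  rw [aeval_eq_bind₁]
  exact eval₂Hom_bind₁ _ _ _ _

theorem eval_aeval_X_add_C [CommSemiring R] (w s : σ → R) (P : MvPolynomial σ R) :
    eval s (aeval (fun i => X i + C (w i)) P) = eval (s + w) P := by
  simp only [eval_aeval, map_add, eval_X, eval_C]
  rfl

theorem eval_aeval_X_sub_C [CommRing R] (w s : σ → R) (P : MvPolynomial σ R) :
    eval s (aeval (fun i => X i - C (w i)) P) = eval (s - w) P := by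
  simp only [eval_aeval, map_sub, eval_X, eval_C]
  rfl

theorem aeval_X_sub_C_aeval_X_add_C [CommRing R] (w : σ → R) (P : MvPolynomial σ R) :
    aeval (fun i => X i - C (w i)) (aeval (fun i => X i + C (w i)) P) = P := by
  rw [← AlgHom.comp_apply, comp_aeval]
  simp

theorem map_idealOfVars_le_vanishingIdeal [Field R] (w : σ → R) :
    (idealOfVars σ R).map (aeval fun i => X i - C (w i)) ≤ vanishingIdeal R {w} := by
  rw [Ideal.map_span, Ideal.span_le]
  rintro _ ⟨_, ⟨i, rfl⟩, rfl⟩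
  simp

theorem vanishingIdeal_singleton_injective [Field R] :
    Function.Injective fun w : σ → R => vanishingIdeal R {w} := by
  intro w w' (h : vanishingIdeal R {w} = vanishingIdeal R {w'})
  funext i
  have : X i - C (w i) ∈ vanishingIdeal R {w'} := h ▸ (by simp)
  simpa [sub_eq_zero, eq_comm] using this

end Translation

theorem prod_vanishingIdeal_singleton_le {σ R : Type*} [Field R] (s : Finset (σ → R)) :
    ∏ w ∈ s, vanishingIdeal R {w} ≤ vanishingIdeal R (s : Set (σ → R)) :=
  Ideal.prod_le_inf.trans fun _ hf x hx =>
    (Finset.inf_le (f := fun w => vanishingIdeal R {w}) hx hf) x rfl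

theorem IsHomogeneous.eval_smul {σ R : Type*} [CommSemiring R] {φ : MvPolynomial σ R} {d : ℕ}
    (hφ : φ.IsHomogeneous d) (t : R) (v : σ → R) : eval (t • v) φ = t ^ d * eval v φ := by
  rw [eval_eq, eval_eq, Finset.mul_sum]
  refine Finset.sum_congr rfl fun m hm => ?_
  simp only [Pi.smul_apply, smul_eq_mul, mul_pow, Finset.prod_mul_distrib,
    Finset.prod_pow_eq_pow_sum, hφ.degree_eq_sum_deg_support hm]
  ring

section VanishingOrder

variable (σ 𝕜 : Type*) [Fintype σ] [NontriviallyNormedField 𝕜]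

def vanishingOrderIdeal (k : ℕ) : Ideal (MvPolynomial σ 𝕜) where
  carrier := {P | (fun y => eval y P) =O[𝓝 0] fun y => ‖y‖ ^ k}
  add_mem' hP hQ := by simpa only [Set.mem_ofPred_eq, map_add] using hP.add hQ
  zero_mem' := by simpa only [Set.mem_ofPred_eq, map_zero] using isBigO_zero _ _
  smul_mem' c P hP := by
    simpa only [Set.mem_ofPred_eq, smul_eq_mul, map_mul, one_mul] using
      (((continuous_eval c).tendsto 0).isBigO_one ℝ).mul hP

variable {σ 𝕜}

theorem mem_vanishingOrderIdeal {k : ℕ} {P : MvPolynomial σ 𝕜} :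
    P ∈ vanishingOrderIdeal σ 𝕜 k ↔ (fun y => eval y P) =O[𝓝 0] fun y => ‖y‖ ^ k :=
  Iff.rfl

theorem vanishingOrderIdeal_zero : vanishingOrderIdeal σ 𝕜 0 = ⊤ :=
  eq_top_iff.2 fun P _ => by
    simpa only [mem_vanishingOrderIdeal, pow_zero] using
      ((continuous_eval P).tendsto 0).isBigO_one ℝ

theorem vanishingOrderIdeal_mul_le (k l : ℕ) :
    vanishingOrderIdeal σ 𝕜 k * vanishingOrderIdeal σ 𝕜 l ≤ vanishingOrderIdeal σ 𝕜 (k + l) :=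
  Ideal.mul_le.2 fun P hP Q hQ => by
    simpa only [mem_vanishingOrderIdeal, map_mul, pow_add] using hP.mul hQ

theorem vanishingOrderIdeal_antitone : Antitone (vanishingOrderIdeal σ 𝕜) := by
  intro k l hkl P hP
  refine hP.trans (IsBigO.of_bound 1 ?_)
  filter_upwards [Metric.closedBall_mem_nhds (0 : σ → 𝕜) one_pos] with y hy
  rw [mem_closedBall_zero_iff] at hy
  simpa only [norm_pow, norm_norm, one_mul] using pow_le_pow_of_le_one (norm_nonneg y) hy hkl

theorem idealOfVars_le_vanishingOrderIdeal_one :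
    idealOfVars σ 𝕜 ≤ vanishingOrderIdeal σ 𝕜 1 := by
  refine Ideal.span_le.2 (Set.range_subset_iff.2 fun i => ?_)
  refine isBigO_of_le _ fun y => ?_
  simpa only [eval_X, pow_one, norm_norm] using norm_le_pi_norm y i

theorem pow_idealOfVars_le_vanishingOrderIdeal (k : ℕ) :
    idealOfVars σ 𝕜 ^ k ≤ vanishingOrderIdeal σ 𝕜 k := by
  induction k with
  | zero => simp [vanishingOrderIdeal_zero]
  | succ k ih =>
    rw [pow_succ]
    exact (Ideal.mul_mono ih idealOfVars_le_vanishingOrderIdeal_one).trans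
      (vanishingOrderIdeal_mul_le k 1)

theorem IsHomogeneous.eq_zero_of_mem_vanishingOrderIdeal {φ : MvPolynomial σ 𝕜} {d : ℕ}
    (hφ : φ.IsHomogeneous d) (h : φ ∈ vanishingOrderIdeal σ 𝕜 (d + 1)) : φ = 0 := by
  refine hφ.eq_zero_of_forall_eval_eq_zero fun v => ?_
  obtain ⟨C, hC⟩ := h.bound
  have hline : Tendsto (fun t : 𝕜 => t • v) (𝓝[≠] 0) (𝓝 0) := by
    simpa using ((continuous_id.smul continuous_const).tendsto (0 : 𝕜)).mono_left
      nhdsWithin_le_nhds (f := fun t : 𝕜 => t • v)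
  -- along the line `t • v`, `|t| ^ d * |φ v| = |φ (t • v)| ≤ C |t| ^ (d + 1) |v| ^ (d + 1)`
  have hbound : ∀ᶠ t : 𝕜 in 𝓝[≠] 0, ‖eval v φ‖ ≤ C * ‖v‖ ^ (d + 1) * ‖t‖ := by
    filter_upwards [hline.eventually hC, self_mem_nhdsWithin] with t ht ht0
    rw [hφ.eval_smul, norm_mul, norm_pow, norm_smul, norm_pow, norm_mul, norm_norm, norm_norm,
      mul_pow, pow_succ] at ht
    refine le_of_mul_le_mul_left ?_ (pow_pos (norm_pos_iff.2 ht0) d)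
    linarith
  have : Tendsto (fun _ : 𝕜 => eval v φ) (𝓝[≠] 0) (𝓝 0) :=
    (IsBigO.of_bound _ hbound).trans_tendsto (tendsto_id.mono_left nhdsWithin_le_nhds)
  exact tendsto_const_nhds_iff.1 this

theorem homogeneousComponent_eq_zero_of_mem_vanishingOrderIdeal {P : MvPolynomial σ 𝕜} {N : ℕ}
    (hP : P ∈ vanishingOrderIdeal σ 𝕜 N) {d : ℕ} (hd : d < N) : homogeneousComponent d P = 0 := by
  induction d using Nat.strong_induction_on with
  | _ d ih =>
  have hrest : P - homogeneousComponent d P ∈ idealOfVars σ 𝕜 ^ (d + 1) := by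
    refine (mem_pow_idealOfVars_iff' _ _).2 fun m hm => ?_
    rw [coeff_sub, coeff_homogeneousComponent]
    rcases (Nat.lt_succ_iff.1 hm).lt_or_eq with hlt | heq
    · have := congrArg (coeff m) (ih _ hlt (hlt.trans hd))
      rw [coeff_homogeneousComponent, if_pos rfl] at this
      rw [if_neg hlt.ne, this, coeff_zero, sub_zero]
    · rw [if_pos heq, sub_self]
  refine (homogeneousComponent_isHomogeneous d P).eq_zero_of_mem_vanishingOrderIdeal ?_
  simpa using sub_mem (vanishingOrderIdeal_antitone hd hP)
    (pow_idealOfVars_le_vanishingOrderIdeal _ hrest)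

theorem vanishingOrderIdeal_eq_pow_idealOfVars (N : ℕ) :
    vanishingOrderIdeal σ 𝕜 N = idealOfVars σ 𝕜 ^ N := by
  refine le_antisymm (fun P hP => (mem_pow_idealOfVars_iff' _ _).2 fun m hm => ?_)
    (pow_idealOfVars_le_vanishingOrderIdeal N)
  simpa [coeff_homogeneousComponent] using
    congrArg (coeff m) (homogeneousComponent_eq_zero_of_mem_vanishingOrderIdeal hP hm)

theorem mem_vanishingIdeal_singleton_pow_of_isBigO {w : σ → 𝕜} {P : MvPolynomial σ 𝕜} {N : ℕ}
    (h : (fun y => eval (w + y) P) =O[𝓝 0] fun y => ‖y‖ ^ N) :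
    P ∈ vanishingIdeal 𝕜 {w} ^ N := by
  have hP : aeval (fun i => X i + C (w i)) P ∈ idealOfVars σ 𝕜 ^ N := by
    rw [← vanishingOrderIdeal_eq_pow_idealOfVars, mem_vanishingOrderIdeal]
    simpa only [eval_aeval_X_add_C, add_comm _ w] using h
  have := Ideal.mem_map_of_mem (aeval fun i => X i - C (w i)) hP
  rw [aeval_X_sub_C_aeval_X_add_C, Ideal.map_pow] at this
  exact Ideal.pow_right_mono (map_idealOfVars_le_vanishingIdeal w) N this

end VanishingOrder

section Taylor

variable {σ 𝕜 : Type*} [Fintype σ] [NontriviallyNormedField 𝕜]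

theorem exists_eval_eq_continuousMultilinearMap_apply_diag {k : ℕ}
    (m : ContinuousMultilinearMap 𝕜 (fun _ : Fin k => σ → 𝕜) 𝕜) :
    ∃ P : MvPolynomial σ 𝕜, ∀ y, eval y P = m fun _ => y := by
  classical
  refine ⟨∑ d : Fin k → σ, C (m fun i => Pi.single (d i) 1) * ∏ i, X (d i), fun y => ?_⟩
  have hy : y = ∑ j, y j • (Pi.single j 1 : σ → 𝕜) := by
    simp_rw [← Pi.single_smul', smul_eq_mul, mul_one]
    exact (Finset.univ_sum_single y).symm
  conv_rhs => rw [hy, m.map_sum]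
  simp [m.map_smul_univ, mul_comm]

theorem exists_eval_eq_partialSum (q : FormalMultilinearSeries 𝕜 (σ → 𝕜) 𝕜) (N : ℕ) :
    ∃ P : MvPolynomial σ 𝕜, ∀ y, eval y P = q.partialSum N y := by
  choose P hP using fun k => exists_eval_eq_continuousMultilinearMap_apply_diag (q k)
  exact ⟨∑ k ∈ Finset.range N, P k, fun y => by simp [FormalMultilinearSeries.partialSum, hP]⟩

theorem mem_span_sup_vanishingIdeal_pow {ι : Type*} [Fintype ι] (p : ι → MvPolynomial σ 𝕜)
    {F : MvPolynomial σ 𝕜} {w : σ → 𝕜} {g : ι → (σ → 𝕜) → 𝕜} (hg : ∀ j, AnalyticAt 𝕜 (g j) w)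
    (hF : ∀ᶠ s in 𝓝 w, eval s F = ∑ j, g j s * eval s (p j)) (N : ℕ) :
    F ∈ Ideal.span (Set.range p) ⊔ vanishingIdeal 𝕜 {w} ^ N := by
  choose q hq using hg
  choose T hT using fun j => exists_eval_eq_partialSum (q j) N
  set Tw : ι → MvPolynomial σ 𝕜 := fun j => aeval (fun i => X i - C (w i)) (T j)
  have hshift : Tendsto (fun y : σ → 𝕜 => w + y) (𝓝 0) (𝓝 w) := by
    simpa using (continuous_const_add w).tendsto 0
  have hR : (fun y => eval (w + y) (F - ∑ j, Tw j * p j)) =O[𝓝 0] fun y => ‖y‖ ^ N := by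
    have hnear : (fun y => ∑ j, (g j (w + y) - (q j).partialSum N y) * eval (w + y) (p j))
        =ᶠ[𝓝 0] fun y => eval (w + y) (F - ∑ j, Tw j * p j) := by
      filter_upwards [hshift.eventually hF] with y hy
      simp only [Tw, map_sub, map_sum, eval_mul, eval_aeval_X_sub_C, add_sub_cancel_left, hT, hy,
        ← Finset.sum_sub_distrib, sub_mul]
    refine (IsBigO.fun_sum fun j _ => ?_).congr' hnear EventuallyEq.rfl
    simpa using ((hq j).isBigO_sub_partialSum_pow N).mul
      ((((continuous_eval (p j)).tendsto w).comp hshift).isBigO_one ℝ)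
  have hsum : ∑ j, Tw j * p j ∈ Ideal.span (Set.range p) :=
    Ideal.sum_mem _ fun j _ => Ideal.mul_mem_left _ _ (Ideal.subset_span ⟨j, rfl⟩)
  simpa using Submodule.add_mem _
    (Submodule.mem_sup_right (mem_vanishingIdeal_singleton_pow_of_isBigO hR))
    (Submodule.mem_sup_left hsum)

end Taylor

end MvPolynomial

open MvPolynomial

theorem stmt2_general {n : ℕ} (p : Fin n → MvPolynomial (Fin n) ℂ)
    (Z : Set (Fin n → ℂ)) (hZ : Z = {z | ∀ j, MvPolynomial.eval z (p j) = 0})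
    (hZfin : Z.Finite)
    (F : MvPolynomial (Fin n) ℂ)
    (hF : ∀ w ∈ Z, ∃ V : Set (Fin n → ℂ), IsOpen V ∧ w ∈ V ∧
      ∃ g : Fin n → ((Fin n → ℂ) → ℂ), (∀ j, AnalyticOnNhd ℂ (g j) V) ∧
        ∀ s ∈ V, MvPolynomial.eval s F = ∑ j, g j s * MvPolynomial.eval s (p j)) :
    F ∈ Ideal.span (Set.range p) := by
  set I := Ideal.span (Set.range p)
  have hZI : zeroLocus ℂ I = Z := by simp [I, zeroLocus_span, hZ]
  obtain ⟨N, hN⟩ := I.exists_radical_pow_le_of_fg (IsNoetherian.noetherian _)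
  refine Ideal.mem_of_forall_mem_sup_pow (s := hZfin.toFinset)
    (M := fun w => vanishingIdeal ℂ {w}) (N := N)
    (fun w _ w' _ hne => Ideal.isCoprime_of_isMaximal
      ((vanishingIdeal_singleton_injective (R := ℂ)).ne hne))
    ?_ fun w hw => ?_
  · calc (∏ w ∈ hZfin.toFinset, vanishingIdeal ℂ {w}) ^ N ≤ vanishingIdeal ℂ Z ^ N := by
          simpa using Ideal.pow_right_mono (prod_vanishingIdeal_singleton_le hZfin.toFinset) N
      _ = I.radical ^ N := by rw [← hZI, vanishingIdeal_zeroLocus_eq_radical]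
      _ ≤ I := hN
  · obtain ⟨V, hV, hwV, g, hg, hFg⟩ := hF w (hZfin.mem_toFinset.1 hw)
    exact mem_span_sup_vanishingIdeal_pow p (fun j => hg j w hwV)
      (eventually_of_mem (hV.mem_nhds hwV) hFg) N

theorem stmt2 {n : ℕ} (p : Fin n → MvPolynomial (Fin n) ℂ)
    (Z : Set (Fin n → ℂ)) (hZ : Z = {z | ∀ j, MvPolynomial.eval z (p j) = 0})
    (hZne : Z.Nonempty) (hZfin : Z.Finite)
    (F : MvPolynomial (Fin n) ℂ)
    (hF : ∀ w ∈ Z, ∃ V : Set (Fin n → ℂ), IsOpen V ∧ w ∈ V ∧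
      ∃ g : Fin n → ((Fin n → ℂ) → ℂ), (∀ j, AnalyticOnNhd ℂ (g j) V) ∧
        ∀ s ∈ V, MvPolynomial.eval s F = ∑ j, g j s * MvPolynomial.eval s (p j)) :
    F ∈ Ideal.span (Set.range p) :=
  stmt2_general p Z hZ hZfin F hF
end

section
/- Let U ⊆ ℂⁿ be an open set containing Z(p), and let f and g be analytic on U. Suppose that for every w ∈ Z(p) there is an open neighborhood of w on which f and g coincide. Then the unique tuples α[f] and α[g] in ℂ^N, characterized by the property that f − Σ_k α_k[f] s^{β_k} and g − Σ_k α_k[g] s^{β_k} belong locally to the ideal generated by p_1,…,p_n in H(U), coincide: α[f] = α[g]. -/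
/-!
Put `P = ∑ₖ (αf k - αg k) s^{β k}`. Near every common zero `w`, `P` is an analytic combination
`∑ⱼ qⱼ pⱼ`; replacing each `qⱼ` by its Taylor polynomial of order `k` leaves a polynomial that
vanishes to order `k` at `w`, so `P ∈ (p) + 𝔪_w^k` for all `k`. By the Nullstellensatz the ideals
`𝔪_w`, `w ∈ Z(p)`, are all the maximal ideals over `(p)`, so Krull's intersection theorem in the
Noetherian ring `ℂ[s]/(p)` kills the class of `P`, and the basis property forces `αf = αg`.
-/

open MvPolynomial Asymptotics Filter Topology

theorem eq_zero_of_forall_mem_maximal_pow {R : Type*} [CommRing R] [IsNoetherianRing R] {x : R}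
    (h : ∀ M : Ideal R, M.IsMaximal → ∀ k : ℕ, x ∈ M ^ k) : x = 0 := by
  by_contra hx
  have hann : (Ideal.span {x}).annihilator ≠ ⊤ := by
    rwa [Ne, Submodule.annihilator_eq_top_iff, Ideal.span_singleton_eq_bot]
  obtain ⟨M, hM, hle⟩ := Ideal.exists_le_maximal _ hann
  -- Krull: some `r ∈ M` fixes `x`, so `1 - r` kills `x` without lying in `M`
  obtain ⟨⟨r, hrM⟩, hr⟩ := (M.mem_iInf_smul_pow_eq_bot_iff x).mp <|
    Submodule.mem_iInf _ |>.mpr fun k => by simpa using h M hM k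
  have h1r : 1 - r ∈ M := hle <| (Submodule.mem_annihilator_span_singleton _ _).mpr <| by
    rw [sub_smul, one_smul, hr, sub_self]
  exact hM.ne_top <| (Ideal.eq_top_iff_one M).mpr <| by simpa using M.add_mem h1r hrM

theorem MvPolynomial.mem_of_forall_mem_sup_vanishingIdeal_pow {σ K : Type*} [Finite σ] [Field K]
    [IsAlgClosed K] {I : Ideal (MvPolynomial σ K)} {P : MvPolynomial σ K}
    (h : ∀ w ∈ zeroLocus K I, ∀ k : ℕ, P ∈ I ⊔ vanishingIdeal K {w} ^ k) : P ∈ I := by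
  rw [← Ideal.Quotient.eq_zero_iff_mem]
  refine eq_zero_of_forall_mem_maximal_pow fun M hM k => ?_
  have hsurj := Ideal.Quotient.mk_surjective (I := I)
  obtain ⟨w, hw⟩ := eq_vanishingIdeal_singleton_of_isMaximal K
    (Ideal.comap_isMaximal_of_surjective _ hsurj (K := M))
  have hwI : w ∈ zeroLocus K I := by
    rw [← Set.singleton_subset_iff, le_zeroLocus_iff_le_vanishingIdeal, ← hw]
    conv_lhs => rw [← Ideal.mk_ker (I := I), RingHom.ker_eq_comap_bot]
    exact Ideal.comap_mono bot_le
  have := Ideal.mem_map_of_mem (Ideal.Quotient.mk I) (h w hwI k)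
  rwa [Ideal.map_sup, Ideal.map_quotient_self, bot_sup_eq, Ideal.map_pow, ← hw,
    Ideal.map_comap_of_surjective _ hsurj] at this

theorem Polynomial.coeff_eq_zero_of_isBigO {𝕜 : Type*} [NontriviallyNormedField 𝕜]
    {Q : Polynomial 𝕜} {k : ℕ} (h : (fun t => Q.eval t) =O[𝓝 0] fun t => ‖t‖ ^ k) :
    ∀ m < k, Q.coeff m = 0 := by
  intro m
  induction m using Nat.strong_induction_on with | _ m ih =>
  intro hm
  obtain ⟨R, rfl⟩ : Polynomial.X ^ m ∣ Q :=
    Polynomial.X_pow_dvd_iff.mpr fun d hd => ih d hd (hd.trans hm)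
  rw [Polynomial.coeff_X_pow_mul', if_pos le_rfl, Nat.sub_self, Polynomial.coeff_zero_eq_eval_zero]
  have hR : (fun t => R.eval t) =O[𝓝[≠] 0] fun t => ‖t‖ ^ (k - m) := by
    have := (isBigO_norm_right.mpr (isBigO_refl (fun t : 𝕜 => (t ^ m)⁻¹) (𝓝[≠] 0))).mul
      (h.mono nhdsWithin_le_nhds)
    refine this.congr' ?_ ?_ <;> filter_upwards [self_mem_nhdsWithin] with t (ht : t ≠ 0)
    · simp [ht]
    · rw [norm_inv, norm_pow, ← div_eq_inv_mul, div_eq_iff (by positivity), ← pow_add,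
        Nat.sub_add_cancel hm.le]
  have hlim : Tendsto (fun t => R.eval t) (𝓝[≠] 0) (𝓝 0) :=
    hR.trans_tendsto <| by
      simpa [zero_pow (Nat.sub_ne_zero_of_lt hm)] using
        ((by fun_prop : Continuous fun t : 𝕜 => ‖t‖ ^ (k - m)).tendsto 0).mono_left
          nhdsWithin_le_nhds
  exact tendsto_nhds_unique
    ((R.continuous.tendsto 0).mono_left nhdsWithin_le_nhds) hlim

section

variable {σ 𝕜 : Type*} [Fintype σ]

theorem MvPolynomial.IsHomogeneous.eval_smul_s3 [CommSemiring 𝕜] {φ : MvPolynomial σ 𝕜} {d : ℕ}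
    (hφ : φ.IsHomogeneous d) (t : 𝕜) (v : σ → 𝕜) :
    eval (t • v) φ = t ^ d * eval v φ := by
  rw [eval_eq', eval_eq', Finset.mul_sum]
  refine Finset.sum_congr rfl fun u hu => ?_
  have hdeg : ∑ i, u i = d := by
    rw [← Finsupp.degree_eq_sum, Finsupp.degree_eq_weight_one]
    exact hφ (mem_support_iff.mp hu)
  simp only [Pi.smul_apply, smul_eq_mul, mul_pow, Finset.prod_mul_distrib,
    Finset.prod_pow_eq_pow_sum, hdeg]
  ring

variable [NontriviallyNormedField 𝕜]

theorem MvPolynomial.homogeneousComponent_eq_zero_of_isBigO {H : MvPolynomial σ 𝕜} {k : ℕ}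
    (h : (fun y => eval y H) =O[𝓝 0] fun y => ‖y‖ ^ k) {d : ℕ} (hd : d < k) :
    homogeneousComponent d H = 0 := by
  refine funext fun v => ?_
  rw [map_zero]
  rcases lt_or_ge H.totalDegree d with hdeg | hdeg
  · rw [homogeneousComponent_eq_zero d H hdeg, map_zero]
  -- restrict `H` to the line through `v`
  let Q : Polynomial 𝕜 := ∑ m ∈ Finset.range (H.totalDegree + 1),
    Polynomial.C (eval v (homogeneousComponent m H)) * Polynomial.X ^ m
  have hQ : ∀ t, Q.eval t = eval (t • v) H := by
    intro t
    conv_rhs => rw [← sum_homogeneousComponent H]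
    simp only [Q, Polynomial.eval_finsetSum, Polynomial.eval_mul, Polynomial.eval_C,
      Polynomial.eval_pow, Polynomial.eval_X, map_sum,
      (homogeneousComponent_isHomogeneous _ H).eval_smul_s3, mul_comm]
  have hQO : (fun t => Q.eval t) =O[𝓝 0] fun t => ‖t‖ ^ k := by
    have hline : Tendsto (fun t : 𝕜 => t • v) (𝓝 0) (𝓝 0) := by
      simpa using (by fun_prop : Continuous fun t : 𝕜 => t • v).tendsto 0
    refine ((h.comp_tendsto hline).trans ?_).congr_left fun t => (hQ t).symm
    refine IsBigO.of_bound (‖v‖ ^ k) (Eventually.of_forall fun t => ?_)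
    simp [norm_smul, mul_pow, mul_comm]
  have := Polynomial.coeff_eq_zero_of_isBigO hQO d hd
  simpa [Q, Polynomial.finsetSum_coeff, Polynomial.coeff_C_mul_X_pow, Nat.lt_succ_of_le hdeg]
    using this

theorem MvPolynomial.mem_pow_idealOfVars_of_isBigO {H : MvPolynomial σ 𝕜} {k : ℕ}
    (h : (fun y => eval y H) =O[𝓝 0] fun y => ‖y‖ ^ k) : H ∈ idealOfVars σ 𝕜 ^ k := by
  refine (mem_pow_idealOfVars_iff' k H).mpr fun u hu => ?_
  have := congrArg (coeff u) (homogeneousComponent_eq_zero_of_isBigO h hu)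
  rwa [coeff_homogeneousComponent, if_pos rfl, coeff_zero] at this

theorem MvPolynomial.mem_vanishingIdeal_pow_of_isBigO {G : MvPolynomial σ 𝕜} {w : σ → 𝕜} {k : ℕ}
    (h : (fun x => eval x G) =O[𝓝 w] fun x => ‖x - w‖ ^ k) :
    G ∈ vanishingIdeal 𝕜 {w} ^ k := by
  let shift : 𝕜 → MvPolynomial σ 𝕜 →ₐ[𝕜] MvPolynomial σ 𝕜 :=
    fun c => aeval fun i => X i + C (c * w i)
  have eval_shift : ∀ c y (F : MvPolynomial σ 𝕜), eval y (shift c F) = eval (y + c • w) F := by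
    intro c y F
    rw [← coe_aeval_eq_eval, ← coe_aeval_eq_eval]
    change (aeval y).comp (shift c) F = _
    rw [comp_aeval]
    have : (fun i => aeval y (X i + C (c * w i))) = y + c • w := by
      funext i
      simp
    rw [this]
    rfl
  have hshift : shift (-1) (shift 1 G) = G := by
    rw [← AlgHom.comp_apply, comp_aeval]
    conv_rhs => rw [← aeval_X_left_apply G]
    congr 1
    ext i
    simp [shift]
  have hH : shift 1 G ∈ idealOfVars σ 𝕜 ^ k := by
    refine mem_pow_idealOfVars_of_isBigO ?_
    have hmove : Tendsto (· + w) (𝓝 (0 : σ → 𝕜)) (𝓝 w) := by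
      simpa using (continuous_add_const w).tendsto 0
    simpa [Function.comp_def, eval_shift] using h.comp_tendsto hmove
  have hle : (idealOfVars σ 𝕜).map (shift (-1)) ≤ vanishingIdeal 𝕜 {w} := by
    rw [idealOfVars, Ideal.map_span, Ideal.span_le]
    rintro _ ⟨_, ⟨i, rfl⟩, rfl⟩
    simp [shift]
  rw [← hshift]
  exact Ideal.pow_right_mono hle k (Ideal.map_pow (shift (-1)) _ k ▸ Ideal.mem_map_of_mem _ hH)

theorem FormalMultilinearSeries.exists_mvPolynomial_eval_eq_partialSum
    (ps : FormalMultilinearSeries 𝕜 (σ → 𝕜) 𝕜) (k : ℕ) (w : σ → 𝕜) :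
    ∃ T : MvPolynomial σ 𝕜, ∀ x, eval x T = ps.partialSum k (x - w) := by
  classical
  refine ⟨∑ m ∈ Finset.range k, ∑ d : Fin m → σ,
    C (ps m fun i => Pi.single (d i) 1) * ∏ i, (X (d i) - C (w (d i))), fun x => ?_⟩
  simp only [map_sum, FormalMultilinearSeries.partialSum]
  refine Finset.sum_congr rfl fun m _ => ?_
  have hx : (fun _ : Fin m => x - w) = fun _ => ∑ i, (x i - w i) • (Pi.single i 1 : σ → 𝕜) := by
    funext _ a
    simp [Pi.single_apply]
  rw [hx, ContinuousMultilinearMap.map_sum]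
  refine Finset.sum_congr rfl fun d _ => ?_
  simp [ContinuousMultilinearMap.map_smul_univ, mul_comm]

theorem AnalyticAt.exists_mvPolynomial_isBigO_sub {f : (σ → 𝕜) → 𝕜} {w : σ → 𝕜}
    (hf : AnalyticAt 𝕜 f w) (k : ℕ) :
    ∃ T : MvPolynomial σ 𝕜, (fun x => f x - eval x T) =O[𝓝 w] fun x => ‖x - w‖ ^ k := by
  obtain ⟨ps, hps⟩ := hf
  obtain ⟨T, hT⟩ := ps.exists_mvPolynomial_eval_eq_partialSum k w
  refine ⟨T, ?_⟩
  have hmove : Tendsto (· - w) (𝓝 w) (𝓝 0) := by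
    simpa using (continuous_sub_right w).tendsto w
  simpa [Function.comp_def, hT] using (hps.isBigO_sub_partialSum_pow k).comp_tendsto hmove

theorem MvPolynomial.mem_span_sup_vanishingIdeal_pow_of_eventuallyEq {ι : Type*} [Fintype ι]
    {p : ι → MvPolynomial σ 𝕜} {P : MvPolynomial σ 𝕜} {w : σ → 𝕜} {q : ι → (σ → 𝕜) → 𝕜}
    (hq : ∀ j, AnalyticAt 𝕜 (q j) w)
    (hP : ∀ᶠ x in 𝓝 w, eval x P = ∑ j, q j x * eval x (p j)) (k : ℕ) :
    P ∈ Ideal.span (Set.range p) ⊔ vanishingIdeal 𝕜 {w} ^ k := by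
  choose T hT using fun j => (hq j).exists_mvPolynomial_isBigO_sub k
  have hspan : ∑ j, T j * p j ∈ Ideal.span (Set.range p) :=
    Ideal.sum_mem _ fun j _ => Ideal.mul_mem_left _ _ (Ideal.subset_span ⟨j, rfl⟩)
  have hrest : P - ∑ j, T j * p j ∈ vanishingIdeal 𝕜 {w} ^ k := by
    refine mem_vanishingIdeal_pow_of_isBigO ?_
    have hbound : (fun x => ∑ j, (q j x - eval x (T j)) * eval x (p j)) =O[𝓝 w]
        fun x => ‖x - w‖ ^ k :=
      IsBigO.fun_sum fun j _ => by
        simpa using (hT j).mul ((continuous_eval (p j)).continuousAt.isBigO_one ℝ)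
    refine hbound.congr' ?_ EventuallyEq.rfl
    filter_upwards [hP] with x hx
    simp [hx, sub_mul]
  simpa using Ideal.add_mem _ (Ideal.mem_sup_left hspan) (Ideal.mem_sup_right hrest)

end

theorem MemLocalIdeal.exists_analyticAt_eventuallyEq {n : ℕ} {U : Set (Fin n → ℂ)}
    {p : Fin n → MvPolynomial (Fin n) ℂ} {g : (Fin n → ℂ) → ℂ} (hg : MemLocalIdeal U p g)
    {w : Fin n → ℂ} (hw : w ∈ U) :
    ∃ q : Fin n → (Fin n → ℂ) → ℂ, (∀ j, AnalyticAt ℂ (q j) w) ∧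
      ∀ᶠ s in 𝓝 w, g s = ∑ j, q j s * eval s (p j) := by
  obtain ⟨V, hVo, -, hwV, q, hq, hV⟩ := hg w hw
  exact ⟨q, fun j => hq j w hwV, eventually_of_mem (hVo.mem_nhds hwV) hV⟩

theorem stmt3_general {n N : ℕ} (p : Fin n → MvPolynomial (Fin n) ℂ)
    (Z : Set (Fin n → ℂ)) (hZ : Z = {z | ∀ j, MvPolynomial.eval z (p j) = 0})
    (β : Fin N → Fin n → ℕ)
    (B : Module.Basis (Fin N) ℂ (MvPolynomial (Fin n) ℂ ⧸ Ideal.span (Set.range p)))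
    (hB : ∀ k, B k = Ideal.Quotient.mk (Ideal.span (Set.range p))
      (∏ i, MvPolynomial.X i ^ β k i))
    (U : Set (Fin n → ℂ)) (hZU : Z ⊆ U)
    (f g : (Fin n → ℂ) → ℂ)
    (hfg : ∀ w ∈ Z, ∃ V : Set (Fin n → ℂ), IsOpen V ∧ w ∈ V ∧ ∀ s ∈ V, f s = g s)
    (αf αg : Fin N → ℂ)
    (hαf : MemLocalIdeal U p (fun s => f s - ∑ k, αf k * ∏ i, s i ^ β k i))
    (hαg : MemLocalIdeal U p (fun s => g s - ∑ k, αg k * ∏ i, s i ^ β k i)) :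
    αf = αg := by
  let mono : (Fin N → ℂ) → MvPolynomial (Fin n) ℂ := fun α => ∑ k, C (α k) * ∏ i, X i ^ β k i
  have eval_mono : ∀ α s, eval s (mono α) = ∑ k, α k * ∏ i, s i ^ β k i := by simp [mono]
  have hmem : mono αf - mono αg ∈ Ideal.span (Set.range p) := by
    refine mem_of_forall_mem_sup_vanishingIdeal_pow fun w hw k => ?_
    have hwZ : w ∈ Z := by simpa [hZ, zeroLocus_span] using hw
    obtain ⟨qf, hqf, hf_loc⟩ := hαf.exists_analyticAt_eventuallyEq (hZU hwZ)
    obtain ⟨qg, hqg, hg_loc⟩ := hαg.exists_analyticAt_eventuallyEq (hZU hwZ)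
    obtain ⟨V, hVo, hwV, hV⟩ := hfg w hwZ
    refine mem_span_sup_vanishingIdeal_pow_of_eventuallyEq (q := qg - qf)
      (fun j => (hqg j).sub (hqf j)) ?_ k
    filter_upwards [hf_loc, hg_loc, hVo.mem_nhds hwV] with s hfs hgs hs
    simp only [map_sub, eval_mono, Pi.sub_apply, sub_mul, Finset.sum_sub_distrib]
    rw [← hfs, ← hgs, hV s hs]
    ring
  have hB0 : ∑ k, (αf k - αg k) • B k = 0 := by
    rw [← Ideal.Quotient.eq_zero_iff_mem.mpr hmem]
    simp only [mono, hB, sub_smul, Finset.sum_sub_distrib, map_sub, map_sum, C_mul']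
    rfl
  funext k
  exact sub_eq_zero.mp (Fintype.linearIndependent_iff.mp B.linearIndependent _ hB0 k)

theorem stmt3 {n N : ℕ} (p : Fin n → MvPolynomial (Fin n) ℂ)
    (Z : Set (Fin n → ℂ)) (hZ : Z = {z | ∀ j, MvPolynomial.eval z (p j) = 0})
    (hZne : Z.Nonempty) (hZfin : Z.Finite)
    (β : Fin N → Fin n → ℕ)
    (B : Module.Basis (Fin N) ℂ (MvPolynomial (Fin n) ℂ ⧸ Ideal.span (Set.range p)))
    (hB : ∀ k, B k = Ideal.Quotient.mk (Ideal.span (Set.range p))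
      (∏ i, MvPolynomial.X i ^ β k i))
    (U : Set (Fin n → ℂ)) (hU : IsOpen U) (hZU : Z ⊆ U)
    (f g : (Fin n → ℂ) → ℂ) (hf : AnalyticOnNhd ℂ f U) (hg : AnalyticOnNhd ℂ g U)
    (hfg : ∀ w ∈ Z, ∃ V : Set (Fin n → ℂ), IsOpen V ∧ w ∈ V ∧ ∀ s ∈ V, f s = g s)
    (αf αg : Fin N → ℂ)
    (hαf : MemLocalIdeal U p (fun s => f s - ∑ k, αf k * ∏ i, s i ^ β k i))
    (hαg : MemLocalIdeal U p (fun s => g s - ∑ k, αg k * ∏ i, s i ^ β k i)) :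
    αf = αg :=
  stmt3_general p Z hZ β B hB U hZU f g hfg αf αg hαf hαg
end

section
/- Let I be a proper ideal of ℂ[x_1,…,x_n] such that the quotient ℂ[x_1,…,x_n]/I is a finite-dimensional ℂ-vector space. Then dim_ℂ (ℂ[x_1,…,x_n]/I) = Σ_{w ∈ Z(I)} ν_w(I), the sum of the multiplicities over the (finitely many) points of the zero set Z(I). -/
/-!
A finite-dimensional algebra is Artinian, hence the product of its localizations at its
finitely many primes, all of them maximal. By the Nullstellensatz the maximal ideals of
`ℂ[x]/I` are exactly the ideals `m_w/I` with `w ∈ Z(I)`, and distinct points give distinct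
ideals, so summing the local dimensions over the primes is summing the multiplicities over `Z(I)`.
-/

namespace MvPolynomial

section CommRing

variable {σ R : Type*} [CommRing R]

theorem ker_eval_eq_span_X_sub_C (w : σ → R) :
    RingHom.ker (eval w) = Ideal.span (Set.range fun i => X i - C (w i)) := by
  set J := Ideal.span (Set.range fun i => X i - C (w i))
  refine le_antisymm (fun p hp => ?_) (Ideal.span_le.mpr ?_)
  · -- modulo `J` every polynomial is congruent to its value at `w`
    have hmk : Ideal.Quotient.mk J = (Ideal.Quotient.mk J).comp (C.comp (eval w)) := by
      refine ringHom_ext (fun a => by simp) fun i => ?_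
      simp only [RingHom.comp_apply, eval_X]
      exact Ideal.Quotient.eq.mpr (Ideal.subset_span ⟨i, rfl⟩)
    rw [← Ideal.Quotient.eq_zero_iff_mem, hmk]
    simp [RingHom.mem_ker.mp hp]
  · rintro _ ⟨i, rfl⟩
    simp

end CommRing

section Field

variable {σ k : Type*} [Field k]

theorem eq_of_span_X_sub_C_le {J : Ideal (MvPolynomial σ k)} (hJ : J ≠ ⊤) {w w' : σ → k}
    (hw : Ideal.span (Set.range fun i => X i - C (w i)) ≤ J)
    (hw' : Ideal.span (Set.range fun i => X i - C (w' i)) ≤ J) : w = w' := by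
  funext i
  by_contra hne
  have hmem : C (w' i - w i) ∈ J := by
    simpa [C_sub] using J.sub_mem (hw (Ideal.subset_span ⟨i, rfl⟩))
      (hw' (Ideal.subset_span ⟨i, rfl⟩))
  exact hJ (Ideal.eq_top_of_isUnit_mem _ hmem ((sub_ne_zero.mpr (Ne.symm hne)).isUnit.map C))

variable (I : Ideal (MvPolynomial σ k))

noncomputable abbrev pointIdeal (w : σ → k) : Ideal (MvPolynomial σ k ⧸ I) :=
  Ideal.map (Ideal.Quotient.mk I) (Ideal.span (Set.range fun i => X i - C (w i)))

theorem eq_of_pointIdeal_eq {w w' : σ → k} (h : pointIdeal I w = pointIdeal I w')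
    (hne : pointIdeal I w ≠ ⊤) : w = w' :=
  eq_of_span_X_sub_C_le (Ideal.comap_ne_top _ hne) Ideal.le_comap_map
    (h ▸ Ideal.le_comap_map)

theorem exists_pointIdeal_eq [IsAlgClosed k] [Finite σ] (P : Ideal (MvPolynomial σ k ⧸ I))
    [P.IsMaximal] : ∃ w ∈ {z : σ → k | ∀ p ∈ I, eval z p = 0}, pointIdeal I w = P := by
  have hmax : (P.comap (Ideal.Quotient.mk I)).IsMaximal :=
    Ideal.comap_isMaximal_of_surjective _ Ideal.Quotient.mk_surjective
  obtain ⟨w, hw⟩ := eq_vanishingIdeal_singleton_of_isMaximal k hmax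
  have hker : P.comap (Ideal.Quotient.mk I) = RingHom.ker (eval w) := by
    ext p
    rw [hw, mem_vanishingIdeal_singleton_iff]
    rfl
  refine ⟨w, fun p hp => ?_, ?_⟩
  · rw [← RingHom.mem_ker, ← hker, Ideal.mem_comap, Ideal.Quotient.eq_zero_iff_mem.mpr hp]
    exact P.zero_mem
  · rw [pointIdeal, ← ker_eval_eq_span_X_sub_C, ← hker,
      Ideal.map_comap_of_surjective _ Ideal.Quotient.mk_surjective]

end Field

end MvPolynomial

open MvPolynomial

theorem stmt9_general {n : ℕ} (I : Ideal (MvPolynomial (Fin n) ℂ))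
    [FiniteDimensional ℂ (MvPolynomial (Fin n) ℂ ⧸ I)]
    (hfin : {z : Fin n → ℂ | ∀ p ∈ I, MvPolynomial.eval z p = 0}.Finite)
    (hprime : ∀ w ∈ {z : Fin n → ℂ | ∀ p ∈ I, MvPolynomial.eval z p = 0},
      (Ideal.map (Ideal.Quotient.mk I)
        (Ideal.span (Set.range fun i => MvPolynomial.X i - MvPolynomial.C (w i)))).IsPrime) :
    Module.finrank ℂ (MvPolynomial (Fin n) ℂ ⧸ I) =
      ∑ w ∈ hfin.toFinset.attach,
        Module.finrank ℂ (Localization (@Ideal.primeCompl _ _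
          (Ideal.map (Ideal.Quotient.mk I)
            (Ideal.span (Set.range fun i => MvPolynomial.X i - MvPolynomial.C (w.1 i))))
          (hprime w.1 (hfin.mem_toFinset.mp w.2)))) := by
  have : IsArtinianRing (MvPolynomial (Fin n) ℂ ⧸ I) := isArtinian_of_tower ℂ inferInstance
  have : Fintype (PrimeSpectrum (MvPolynomial (Fin n) ℂ ⧸ I)) := Fintype.ofFinite _
  let point (w : hfin.toFinset) : PrimeSpectrum (MvPolynomial (Fin n) ℂ ⧸ I) :=
    ⟨pointIdeal I w.1, hprime w.1 (hfin.mem_toFinset.mp w.2)⟩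
  have hinj : Function.Injective point := fun w w' h =>
    Subtype.ext <| eq_of_pointIdeal_eq I (congrArg PrimeSpectrum.asIdeal h)
      (hprime w.1 (hfin.mem_toFinset.mp w.2)).ne_top
  have hsurj : Function.Surjective point := fun P => by
    have := IsArtinianRing.isMaximal_of_isPrime P.asIdeal
    obtain ⟨w, hw, hP⟩ := exists_pointIdeal_eq I P.asIdeal
    exact ⟨⟨w, hfin.mem_toFinset.mpr hw⟩, PrimeSpectrum.ext hP⟩
  rw [IsArtinianRing.finrank_eq_sum_primeSpectrum, ← Finset.univ_eq_attach]
  exact (Fintype.sum_bijective point ⟨hinj, hsurj⟩ _ _ fun _ => rfl).symm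

theorem stmt9 {n : ℕ} (I : Ideal (MvPolynomial (Fin n) ℂ)) (hI : I ≠ ⊤)
    [FiniteDimensional ℂ (MvPolynomial (Fin n) ℂ ⧸ I)]
    (hfin : {z : Fin n → ℂ | ∀ p ∈ I, MvPolynomial.eval z p = 0}.Finite)
    (hprime : ∀ w ∈ {z : Fin n → ℂ | ∀ p ∈ I, MvPolynomial.eval z p = 0},
      (Ideal.map (Ideal.Quotient.mk I)
        (Ideal.span (Set.range fun i => MvPolynomial.X i - MvPolynomial.C (w i)))).IsPrime) :
    Module.finrank ℂ (MvPolynomial (Fin n) ℂ ⧸ I) =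
      ∑ w ∈ hfin.toFinset.attach,
        Module.finrank ℂ (Localization (@Ideal.primeCompl _ _
          (Ideal.map (Ideal.Quotient.mk I)
            (Ideal.span (Set.range fun i => MvPolynomial.X i - MvPolynomial.C (w.1 i))))
          (hprime w.1 (hfin.mem_toFinset.mp w.2)))) :=
  stmt9_general I hfin hprime
end

section
/- Let U ⊆ ℂⁿ be an open set containing Z(p), let complex numbers a_{w,ℓ} be given for each w ∈ Z(p) and each ℓ ∈ ℕⁿ with ℓ ≺ ν_w − 𝟏, not all zero, and let c ∈ ℂ. Then: (i) the ℂ-linear functional Λ, defined on the space of polynomials L ∈ ℂ[s_1,…,s_n] with deg_{s_j} L ≤ d_j − 1 for all j by Λ(L) = Σ_{w ∈ Z(p)} Σ_{ℓ ≺ ν_w − 𝟏} a_{w,ℓ} ∂^ℓ L(w), is nonzero; (ii) a function f analytic on U satisfies Σ_{w ∈ Z(p)} Σ_{ℓ ≺ ν_w − 𝟏} a_{w,ℓ} ∂^ℓ f(w) = c if and only if Λ(L_f) = c, where L_f is the unique polynomial with deg_{s_j} L_f ≤ d_j − 1 for all j such that f − L_f belongs locally to the ideal generated by p_1(s_1),…,p_n(s_n)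 in H(U); in particular the set of such solutions f is nonempty. -/
/-- The interpolation functional `g ↦ Σ_{w ∈ Z(p)} Σ_{ℓ ≺ ν_w − 𝟏} a_{w,ℓ} ∂^ℓ g(w)`. -/
noncomputable def interpSum {n : ℕ} (m : Fin n → ℕ) (ξ : ∀ j, Fin (m j) → ℂ)
    (ν : ∀ j, Fin (m j) → ℕ)
    (a : (∀ j, Fin (m j)) → (Fin n → ℕ) → ℂ) (g : (Fin n → ℂ) → ℂ) : ℂ :=
  ∑ κ : ∀ j, Fin (m j), ∑ ℓ : ∀ j, Fin (ν j (κ j)),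
    a κ (fun j => (ℓ j : ℕ)) *
      mixedPartial (fun j => (ℓ j : ℕ)) g (fun j => ξ j (κ j))

/-!
If `f ≡ g` modulo the ideal generated by the `(s j - w j) ^ (t j + δ i j)` in the analytic
functions near `w`, then `∂_i f ≡ ∂_i g` modulo the `(s j - w j) ^ t j` (product rule). Iterating,
`∂^ℓ f (w) = ∂^ℓ g (w)` as soon as `f ≡ g` modulo the `p j` near `w` and `ℓ ≺ ν_w - 𝟏`, since every
`p j` is divisible by `(s j - w j) ^ ν_{w,j}`; this is (ii).

For (i), a separated polynomial `L = ∏ j, q j (s j)` has `∂^ℓ L (w) = ∏ j, q j ^(ℓ j) (w j)`.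
Pick `κ₀` with `a κ₀ ≠ 0` and `ℓ₀` maximal for `≺` with `a κ₀ ℓ₀ ≠ 0`, and let `q j` vanish to
order `ν j κ` at `ξ j κ` for `κ ≠ κ₀ j` and to order `ℓ₀ j` at `ξ j (κ₀ j)`. Then the term
`(κ₀, ℓ₀)` is the only nonzero term of `Λ(L)`, and `deg q j < d j`. Rescaling `L` solves `Λ = c`.
-/

open MvPolynomial

section PartialDerivatives

variable {n : ℕ} {f g : (Fin n → ℂ) → ℂ} {x : Fin n → ℂ} (j : Fin n)

theorem pdOp_congr_of_eqOn {V : Set (Fin n → ℂ)} (hV : IsOpen V) (hfg : Set.EqOn f g V)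
    (hx : x ∈ V) : pdOp j f x = pdOp j g x := by
  rw [pdOp, pdOp, (Filter.eventuallyEq_of_mem (hV.mem_nhds hx) hfg).fderiv_eq]

theorem AnalyticAt.pdOp (hf : AnalyticAt ℂ f x) : AnalyticAt ℂ (pdOp j f) x :=
  ((ContinuousLinearMap.apply ℂ ℂ (Pi.single j 1 : Fin n → ℂ)).analyticAt _).comp hf.fderiv

theorem AnalyticOnNhd.pdOp {V : Set (Fin n → ℂ)} (hf : AnalyticOnNhd ℂ f V) :
    AnalyticOnNhd ℂ (pdOp j f) V :=
  fun x hx => (hf x hx).pdOp j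

theorem pdOp_add (hf : DifferentiableAt ℂ f x) (hg : DifferentiableAt ℂ g x) :
    pdOp j (fun y => f y + g y) x = pdOp j f x + pdOp j g x := by
  simp [pdOp, fderiv_fun_add hf hg]

theorem pdOp_sub (hf : DifferentiableAt ℂ f x) (hg : DifferentiableAt ℂ g x) :
    pdOp j (fun y => f y - g y) x = pdOp j f x - pdOp j g x := by
  simp [pdOp, fderiv_fun_sub hf hg]

theorem pdOp_mul (hf : DifferentiableAt ℂ f x) (hg : DifferentiableAt ℂ g x) :
    pdOp j (fun y => f y * g y) x = f x * pdOp j g x + g x * pdOp j f x := by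
  simp [pdOp, fderiv_fun_mul hf hg]

theorem pdOp_sum {ι : Type*} (s : Finset ι) {F : ι → (Fin n → ℂ) → ℂ}
    (hF : ∀ i ∈ s, DifferentiableAt ℂ (F i) x) :
    pdOp j (fun y => ∑ i ∈ s, F i y) x = ∑ i ∈ s, pdOp j (F i) x := by
  simp [pdOp, fderiv_fun_sum hF]

theorem pdOp_const_mul (c : ℂ) (f : (Fin n → ℂ) → ℂ) :
    pdOp j (fun y => c * f y) = fun y => c * pdOp j f y := by
  funext y
  simp [pdOp, ← smul_eq_mul, ← Pi.smul_def, fderiv_const_smul_field]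

theorem analyticAt_eval (P : MvPolynomial (Fin n) ℂ) (x : Fin n → ℂ) :
    AnalyticAt ℂ (fun y => eval y P) x :=
  AnalyticOnNhd.eval_mvPolynomial P x trivial

theorem pdOp_eval (P : MvPolynomial (Fin n) ℂ) :
    pdOp j (fun y => eval y P) = fun y => eval y (pderiv j P) := by
  funext x
  induction P using MvPolynomial.induction_on with
  | C a => simp [pdOp]
  | add P Q hP hQ =>
    simpa [hP, hQ] using
      pdOp_add j (analyticAt_eval P x).differentiableAt (analyticAt_eval Q x).differentiableAt
  | mul_X P i hP =>
    have hX : pdOp j (fun y => eval y (X i)) x = Pi.single (M := fun _ => ℂ) i 1 j := by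
      simp [pdOp, (hasFDerivAt_apply i x).fderiv, Pi.single_apply, eq_comm]
    have := pdOp_mul j (analyticAt_eval P x).differentiableAt
      (analyticAt_eval (X i) x).differentiableAt
    simp only [← eval_mul, hP, hX] at this
    rw [this]
    simp [Pi.single_apply, eq_comm, apply_ite (eval x)]

end PartialDerivatives

theorem pdOp_sub_pow_mul {n : ℕ} (i j : Fin n) (c : ℂ) (e : ℕ) {h : (Fin n → ℂ) → ℂ} {x : Fin n → ℂ}
    (hh : DifferentiableAt ℂ h x) :
    pdOp i (fun s => (s j - c) ^ e * h s) x =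
      (x j - c) ^ e * pdOp i h x + (if j = i then e * (x j - c) ^ (e - 1) else 0) * h x := by
  have key := pdOp_mul i (analyticAt_eval ((X j - C c) ^ e) x).differentiableAt hh
  rw [pdOp_eval] at key
  simpa [Pi.single_apply, mul_comm, apply_ite (eval x)] using key

theorem semiconj_foldr_iterate {α β ι : Type*} (φ : α → β) {S : ι → α → α} {T : ι → β → β}
    (h : ∀ i, Function.Semiconj φ (S i) (T i)) (k : ι → ℕ) (js : List ι) (a : α) :
    φ (js.foldr (fun i x => (S i)^[k i] x) a) = js.foldr (fun i y => (T i)^[k i] y) (φ a) := by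
  induction js with
  | nil => rfl
  | cons i js ih => simp only [List.foldr_cons, ((h i).iterate_right (k i)).eq, ih]

theorem mixedPartial_const_mul {n : ℕ} (ℓ : Fin n → ℕ) (c : ℂ) (f : (Fin n → ℂ) → ℂ) :
    mixedPartial ℓ (fun y => c * f y) = fun y => c * mixedPartial ℓ f y :=
  (semiconj_foldr_iterate (fun (g : (Fin n → ℂ) → ℂ) y => c * g y) (S := pdOp) (T := pdOp)
    (fun j g => (pdOp_const_mul j c g).symm) ℓ (List.finRange n) f).symm

theorem interpSum_const_mul {n : ℕ} (m : Fin n → ℕ) (ξ : ∀ j, Fin (m j) → ℂ)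
    (ν : ∀ j, Fin (m j) → ℕ) (a : (∀ j, Fin (m j)) → (Fin n → ℕ) → ℂ) (c : ℂ)
    (g : (Fin n → ℂ) → ℂ) :
    interpSum m ξ ν a (fun y => c * g y) = c * interpSum m ξ ν a g := by
  simp only [interpSum, mixedPartial_const_mul, Finset.mul_sum]
  exact Finset.sum_congr rfl fun _ _ => Finset.sum_congr rfl fun _ _ => by ring

section AnalyticModEq

variable {n : ℕ} {V : Set (Fin n → ℂ)} {w : Fin n → ℂ} {t : Fin n → ℕ} {f g : (Fin n → ℂ) → ℂ}

/-- `f ≡ g` modulo the ideal of `H(V)` generated by the `(s j - w j) ^ t j`. -/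
def AnalyticModEq (V : Set (Fin n → ℂ)) (w : Fin n → ℂ) (t : Fin n → ℕ)
    (f g : (Fin n → ℂ) → ℂ) : Prop :=
  AnalyticOnNhd ℂ f V ∧ AnalyticOnNhd ℂ g V ∧
    ∃ h : Fin n → (Fin n → ℂ) → ℂ, (∀ j, AnalyticOnNhd ℂ (h j) V) ∧
      ∀ s ∈ V, f s - g s = ∑ j, (s j - w j) ^ t j * h j s

theorem AnalyticModEq.pdOp (hV : IsOpen V) (i : Fin n)
    (hfg : AnalyticModEq V w (t + Pi.single i 1) f g) :
    AnalyticModEq V w t (pdOp i f) (pdOp i g) := by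
  obtain ⟨hf, hg, h, hh, hfgh⟩ := hfg
  -- `∂_i ((s_i - w_i)^(t_i+1) h) = (s_i - w_i)^t_i ((s_i - w_i) ∂_i h + (t_i+1) h)`
  refine ⟨hf.pdOp i, hg.pdOp i,
    fun j s => if j = i then (s j - w j) * _root_.pdOp i (h j) s + ((t j : ℂ) + 1) * h j s
      else _root_.pdOp i (h j) s, fun j => ?_, fun s hs => ?_⟩
  · dsimp only
    split_ifs
    · intro s hs
      exact ((((ContinuousLinearMap.proj j).analyticAt s).sub analyticAt_const).mul
        ((hh j s hs).pdOp i)).add (analyticAt_const.mul (hh j s hs))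
    · exact (hh j).pdOp i
  · have hd : ∀ j ∈ Finset.univ,
        DifferentiableAt ℂ (fun s => (s j - w j) ^ (t + Pi.single i 1 : Fin n → ℕ) j * h j s) s :=
      fun j _ => by have := (hh j s hs).differentiableAt; fun_prop
    rw [← pdOp_sub i (hf s hs).differentiableAt (hg s hs).differentiableAt,
      pdOp_congr_of_eqOn i hV hfgh hs, pdOp_sum i _ hd]
    refine Finset.sum_congr rfl fun j _ => ?_
    rw [pdOp_sub_pow_mul i j (w j) _ (hh j s hs).differentiableAt]
    by_cases hji : j = i
    · subst hji
      simp only [Pi.add_apply, Pi.single_eq_same, ↓reduceIte]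
      push_cast
      ring
    · simp [hji]

theorem AnalyticModEq.iterate_pdOp (hV : IsOpen V) (i : Fin n) (k : ℕ)
    (hfg : AnalyticModEq V w (t + Pi.single i k) f g) :
    AnalyticModEq V w t ((_root_.pdOp i)^[k] f) ((_root_.pdOp i)^[k] g) := by
  induction k generalizing f g with
  | zero => simpa using hfg
  | succ k ih =>
    rw [Pi.single_add, ← add_assoc] at hfg
    exact ih (hfg.pdOp hV i)

theorem AnalyticModEq.foldr (hV : IsOpen V) (ℓ : Fin n → ℕ) (js : List (Fin n))
    (hfg : AnalyticModEq V w (fun j => t j + ℓ j * js.count j) f g) :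
    AnalyticModEq V w t (js.foldr (fun j φ => (_root_.pdOp j)^[ℓ j] φ) f)
      (js.foldr (fun j φ => (_root_.pdOp j)^[ℓ j] φ) g) := by
  induction js generalizing t with
  | nil => simpa using hfg
  | cons i js ih =>
    refine (ih ?_).iterate_pdOp hV i (ℓ i)
    convert hfg using 2 with j
    rcases eq_or_ne j i with rfl | hji
    · simp only [Pi.add_apply, Pi.single_eq_same, List.count_cons_self]
      ring
    · simp [hji, hji.symm]

theorem AnalyticModEq.mixedPartial (hV : IsOpen V) (ℓ : Fin n → ℕ)
    (hfg : AnalyticModEq V w (t + ℓ) f g) :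
    AnalyticModEq V w t (_root_.mixedPartial ℓ f) (_root_.mixedPartial ℓ g) :=
  AnalyticModEq.foldr hV ℓ (List.finRange n) (by
    simp only [List.count_finRange, mul_one]
    exact hfg)

theorem AnalyticModEq.eq_at_center (hfg : AnalyticModEq V w t f g) (ht : ∀ j, t j ≠ 0)
    (hw : w ∈ V) : f w = g w := by
  obtain ⟨-, -, h, -, hfgh⟩ := hfg
  simpa [sub_eq_zero, zero_pow (ht _)] using hfgh w hw

end AnalyticModEq

theorem MemLocalIdeal.exists_analyticModEq {n : ℕ} {U : Set (Fin n → ℂ)}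
    {p : Fin n → MvPolynomial (Fin n) ℂ} {w : Fin n → ℂ} {t : Fin n → ℕ}
    {f g : (Fin n → ℂ) → ℂ} (hfg : MemLocalIdeal U p fun s => f s - g s)
    (hp : ∀ j, ∃ r, p j = (X j - C (w j)) ^ t j * r) (hf : AnalyticOnNhd ℂ f U)
    (hg : AnalyticOnNhd ℂ g U) (hw : w ∈ U) :
    ∃ V, IsOpen V ∧ w ∈ V ∧ AnalyticModEq V w t f g := by
  obtain ⟨V, hV, hVU, hwV, q, hq, hfgq⟩ := hfg w hw
  choose r hr using hp
  refine ⟨V, hV, hwV, hf.mono hVU, hg.mono hVU, fun j s => q j s * eval s (r j),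
    fun j s hs => (hq j s hs).mul (analyticAt_eval _ s), fun s hs => ?_⟩
  refine (hfgq s hs).trans (Finset.sum_congr rfl fun j _ => ?_)
  simp only [hr, eval_mul, eval_pow, eval_sub, eval_X, eval_C]
  ring

theorem interpSum_eq_of_memLocalIdeal {n : ℕ} {m : Fin n → ℕ} {ξ : ∀ j, Fin (m j) → ℂ}
    {ν : ∀ j, Fin (m j) → ℕ} (a : (∀ j, Fin (m j)) → (Fin n → ℕ) → ℂ)
    {p : Fin n → MvPolynomial (Fin n) ℂ}
    (hp : ∀ j, p j = ∏ κ : Fin (m j), (X j - C (ξ j κ)) ^ ν j κ) {U : Set (Fin n → ℂ)}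
    (hZU : ∀ κ : ∀ j, Fin (m j), (fun j => ξ j (κ j)) ∈ U) {f g : (Fin n → ℂ) → ℂ}
    (hf : AnalyticOnNhd ℂ f U) (hg : AnalyticOnNhd ℂ g U)
    (hfg : MemLocalIdeal U p fun s => f s - g s) :
    interpSum m ξ ν a f = interpSum m ξ ν a g := by
  refine Finset.sum_congr rfl fun κ _ => Finset.sum_congr rfl fun ℓ _ => ?_
  have hpκ : ∀ j, ∃ r, p j = (X j - C (ξ j (κ j))) ^ ν j (κ j) * r := fun j =>
    ⟨_, (hp j).trans (Finset.mul_prod_erase _ _ (Finset.mem_univ (κ j))).symm⟩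
  obtain ⟨V, hV, hwV, hfgV⟩ := hfg.exists_analyticModEq hpκ hf hg (hZU κ)
  have hν : (fun j => ν j (κ j)) = (fun j => ν j (κ j) - ℓ j) + fun j => (ℓ j : ℕ) :=
    funext fun j => (Nat.sub_add_cancel (ℓ j).isLt.le).symm
  rw [hν] at hfgV
  rw [(hfgV.mixedPartial hV _).eq_at_center (fun j => Nat.sub_ne_zero_of_lt (ℓ j).isLt) hwV]

theorem Derivation.map_prod_of_ne {R A ι : Type*} [CommSemiring R] [CommSemiring A]
    [Algebra R A] [Fintype ι] [DecidableEq ι] (D : Derivation R A A) (f : ι → A) {i : ι}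
    (hf : ∀ j ≠ i, D (f j) = 0) :
    D (∏ j, f j) = ∏ j, Function.update f i (D (f i)) j := by
  have hrest : D (∏ j ∈ Finset.univ.erase i, f j) = 0 :=
    Finset.prod_induction _ (fun a => D a = 0) (fun a b ha hb => by simp [ha, hb])
      D.map_one_eq_zero fun j hj => hf j (Finset.ne_of_mem_erase hj)
  rw [← Finset.mul_prod_erase _ _ (Finset.mem_univ i), D.leibniz, hrest, smul_zero, zero_add,
    Finset.prod_update_of_mem (Finset.mem_univ i), smul_eq_mul, mul_comm,
    Finset.sdiff_singleton_eq_erase]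

theorem Derivation.iterate_map_prod_of_ne {R A ι : Type*} [CommSemiring R] [CommSemiring A]
    [Algebra R A] [Fintype ι] [DecidableEq ι] (D : Derivation R A A) (f : ι → A) {i : ι}
    (hf : ∀ j ≠ i, D (f j) = 0) (k : ℕ) :
    D^[k] (∏ j, f j) = ∏ j, Function.update f i (D^[k] (f i)) j := by
  induction k generalizing f with
  | zero => simp
  | succ k ih =>
    rw [Function.iterate_succ_apply, D.map_prod_of_ne f hf,
      ih _ fun j hj => by rw [Function.update_of_ne hj]; exact hf j hj, Function.update_idem,
      Function.update_self, Function.iterate_succ_apply]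

theorem pderiv_aeval_X_of_ne {σ R : Type*} [CommSemiring R] [DecidableEq σ] {i j : σ} (h : j ≠ i)
    (q : Polynomial R) : pderiv i (Polynomial.aeval (X j : MvPolynomial σ R) q) = 0 := by
  simp [pderiv_X, h]

theorem iterate_pderiv_aeval_X {σ R : Type*} [CommSemiring R] [DecidableEq σ] (i : σ) (k : ℕ)
    (q : Polynomial R) :
    (pderiv i)^[k] (Polynomial.aeval (X i : MvPolynomial σ R) q) =
      Polynomial.aeval (X i) (Polynomial.derivative^[k] q) :=
  (Function.Semiconj.iterate_right (fun q => by simp) k q).symm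

theorem foldr_pderiv_prod_aeval_X {σ R : Type*} [CommSemiring R] [Fintype σ] [DecidableEq σ]
    (ℓ : σ → ℕ) (js : List σ) (q : σ → Polynomial R) :
    js.foldr (fun j P => (pderiv j)^[ℓ j] P) (∏ j, Polynomial.aeval (X j) (q j)) =
      ∏ j, Polynomial.aeval (X j : MvPolynomial σ R)
        (Polynomial.derivative^[ℓ j * js.count j] (q j)) := by
  induction js with
  | nil => simp
  | cons i js ih =>
    rw [List.foldr_cons, ih, (pderiv i).iterate_map_prod_of_ne _
      (fun j hj => pderiv_aeval_X_of_ne hj _), iterate_pderiv_aeval_X]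
    refine Finset.prod_congr rfl fun j _ => ?_
    rcases eq_or_ne j i with rfl | hji
    · simp [← Function.iterate_add_apply, mul_add, add_comm]
    · simp [hji, hji.symm]

theorem eval_aeval_X {σ R : Type*} [CommSemiring R] (y : σ → R) (j : σ) (r : Polynomial R) :
    eval y (Polynomial.aeval (X j) r) = r.eval (y j) := by
  change aeval y (Polynomial.aeval (X j) r) = _
  rw [← Polynomial.aeval_algHom_apply, aeval_X, Polynomial.coe_aeval_eq_eval]

theorem mixedPartial_eval_prod_aeval_X {n : ℕ} (ℓ : Fin n → ℕ) (q : Fin n → Polynomial ℂ)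
    (y : Fin n → ℂ) :
    mixedPartial ℓ (fun y => eval y (∏ j, Polynomial.aeval (X j) (q j))) y =
      ∏ j, (Polynomial.derivative^[ℓ j] (q j)).eval (y j) := by
  have h := semiconj_foldr_iterate (fun (P : MvPolynomial (Fin n) ℂ) y => eval y P)
    (S := fun j => pderiv j) (T := pdOp) (fun j P => (pdOp_eval j P).symm) ℓ (List.finRange n)
    (∏ j, Polynomial.aeval (X j) (q j))
  rw [foldr_pderiv_prod_aeval_X] at h
  rw [mixedPartial, ← h]
  simp [List.count_finRange, eval_aeval_X]

theorem degreeOf_aeval_le {σ R : Type*} [CommSemiring R] (i : σ) (P : MvPolynomial σ R)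
    (q : Polynomial R) : degreeOf i (Polynomial.aeval P q) ≤ q.natDegree * degreeOf i P := by
  rw [Polynomial.aeval_eq_sum_range]
  refine (degreeOf_sum_le _ _ _).trans (Finset.sup_le fun k hk => ?_)
  rw [smul_eq_C_mul]
  refine (degreeOf_C_mul_le _ _ _).trans ((degreeOf_pow_le _ _ _).trans ?_)
  exact Nat.mul_le_mul_right _ (Nat.lt_succ_iff.mp (Finset.mem_range.mp hk))

theorem degreeOf_prod_aeval_X_le {σ R : Type*} [CommSemiring R] [Nontrivial R] [Fintype σ]
    (i : σ) (q : σ → Polynomial R) :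
    degreeOf i (∏ j, Polynomial.aeval (X j : MvPolynomial σ R) (q j)) ≤ (q i).natDegree := by
  classical
  refine (degreeOf_prod_le _ _ _).trans ?_
  calc ∑ j, degreeOf i (Polynomial.aeval (X j : MvPolynomial σ R) (q j))
      ≤ ∑ j, (q j).natDegree * degreeOf i (X j : MvPolynomial σ R) :=
        Finset.sum_le_sum fun j _ => degreeOf_aeval_le i _ _
    _ = (q i).natDegree := by simp [degreeOf_X]

theorem rootMultiplicity_prod_X_sub_C_pow {ι R : Type*} [CommRing R] [IsDomain R] [Fintype ι]
    {ξ : ι → R} (hξ : Function.Injective ξ) (e : ι → ℕ) (i : ι) :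
    (∏ κ, (Polynomial.X - Polynomial.C (ξ κ)) ^ e κ).rootMultiplicity (ξ i) = e i := by
  classical
  rw [← Polynomial.count_roots, Polynomial.roots_prod _ _ (Finset.prod_ne_zero_iff.mpr
    fun κ _ => pow_ne_zero _ (Polynomial.X_sub_C_ne_zero _))]
  simp [Multiset.count_bind, Multiset.count_singleton, hξ.eq_iff]

theorem natDegree_prod_X_sub_C_pow {ι R : Type*} [CommRing R] [IsDomain R] [Fintype ι]
    (ξ : ι → R) (e : ι → ℕ) :
    (∏ κ, (Polynomial.X - Polynomial.C (ξ κ)) ^ e κ).natDegree = ∑ κ, e κ := by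
  rw [Polynomial.natDegree_prod_of_monic _ _ fun κ _ => (Polynomial.monic_X_sub_C _).pow _]
  simp

theorem Polynomial.not_isRoot_iterate_derivative_rootMultiplicity {R : Type*} [CommRing R]
    [IsDomain R] [CharZero R] {p : Polynomial R} (hp : p ≠ 0) (t : R) :
    ¬ (Polynomial.derivative^[p.rootMultiplicity t] p).IsRoot t := fun h =>
  lt_irrefl _ <| (Polynomial.lt_rootMultiplicity_iff_isRoot_iterate_derivative hp).2 fun _ hm =>
    hm.lt_or_eq.elim Polynomial.isRoot_iterate_derivative_of_lt_rootMultiplicity (· ▸ h)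

theorem exists_interpSum_eval_ne_zero {n : ℕ} {m : Fin n → ℕ} {ξ : ∀ j, Fin (m j) → ℂ}
    (hξ : ∀ j, Function.Injective (ξ j)) {ν : ∀ j, Fin (m j) → ℕ}
    {a : (∀ j, Fin (m j)) → (Fin n → ℕ) → ℂ}
    (ha : ∃ κ : ∀ j, Fin (m j), ∃ ℓ : Fin n → ℕ, (∀ j, ℓ j < ν j (κ j)) ∧ a κ ℓ ≠ 0) :
    ∃ L : MvPolynomial (Fin n) ℂ, (∀ j, degreeOf j L ≤ (∑ κ, ν j κ) - 1) ∧
      interpSum m ξ ν a (fun s => eval s L) ≠ 0 := by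
  classical
  obtain ⟨κ₀, ℓa, hℓa, haℓ⟩ := ha
  obtain ⟨ℓ₀, hℓ₀, hmax⟩ := Set.Finite.exists_maximalFor id
    {ℓ : ∀ j, Fin (ν j (κ₀ j)) | a κ₀ (fun j => ℓ j) ≠ 0} (Set.toFinite _)
    ⟨fun j => ⟨ℓa j, hℓa j⟩, haℓ⟩
  set e : ∀ j, Fin (m j) → ℕ := fun j => Function.update (ν j) (κ₀ j) (ℓ₀ j) with he
  set q : Fin n → Polynomial ℂ := fun j => ∏ κ, (Polynomial.X - Polynomial.C (ξ j κ)) ^ e j κ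
  have hq : ∀ j, q j ≠ 0 := fun j => Finset.prod_ne_zero_iff.mpr
    fun κ _ => pow_ne_zero _ (Polynomial.X_sub_C_ne_zero _)
  have hmult : ∀ j κ, (q j).rootMultiplicity (ξ j κ) = e j κ :=
    fun j => rootMultiplicity_prod_X_sub_C_pow (hξ j) _
  have hvanish : ∀ (κ : ∀ j, Fin (m j)) (ℓ : ∀ j, Fin (ν j (κ j))) j, (ℓ j : ℕ) < e j (κ j) →
      ∏ j, (Polynomial.derivative^[ℓ j] (q j)).eval (ξ j (κ j)) = 0 := fun κ ℓ j h =>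
    Finset.prod_eq_zero (Finset.mem_univ j)
      (Polynomial.isRoot_iterate_derivative_of_lt_rootMultiplicity (hmult j (κ j) ▸ h))
  refine ⟨∏ j, Polynomial.aeval (X j) (q j), fun j => (degreeOf_prod_aeval_X_le j q).trans ?_, ?_⟩
  · have hlt : ∑ κ, e j κ < ∑ κ, ν j κ := by
      refine Finset.sum_lt_sum (fun κ _ => ?_) ⟨κ₀ j, Finset.mem_univ _, by simp [he]⟩
      rcases eq_or_ne κ (κ₀ j) with rfl | hκ
      · simp [he, (ℓ₀ j).isLt.le]
      · simp [he, hκ]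
    have : (q j).natDegree = ∑ κ, e j κ := natDegree_prod_X_sub_C_pow (ξ j) (e j)
    omega
  · simp only [interpSum, mixedPartial_eval_prod_aeval_X]
    rw [Finset.sum_eq_single κ₀ ?_ (by simp), Finset.sum_eq_single ℓ₀ ?_ (by simp)]
    · refine mul_ne_zero hℓ₀ (Finset.prod_ne_zero_iff.mpr fun j _ => ?_)
      have := Polynomial.not_isRoot_iterate_derivative_rootMultiplicity (hq j) (ξ j (κ₀ j))
      simpa [hmult, he] using this
    · intro ℓ _ hℓ
      by_cases hle : ℓ₀ ≤ ℓ
      · have : a κ₀ (fun j => ℓ j) = 0 := not_not.mp fun h => hℓ (le_antisymm (hmax h hle) hle)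
        rw [this, zero_mul]
      · obtain ⟨j, hj⟩ := not_forall.mp hle
        rw [hvanish κ₀ ℓ j (by simpa [he] using hj), mul_zero]
    · intro κ _ hκ
      obtain ⟨j, hj⟩ := Function.ne_iff.mp hκ
      refine Finset.sum_eq_zero fun ℓ _ => ?_
      rw [hvanish κ ℓ j (by simp [he, hj]), mul_zero]

theorem stmt15_general {n : ℕ} (m : Fin n → ℕ)
    (ξ : ∀ j, Fin (m j) → ℂ) (hξ : ∀ j, Function.Injective (ξ j))
    (ν : ∀ j, Fin (m j) → ℕ)
    (p : Fin n → MvPolynomial (Fin n) ℂ)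
    (hp : ∀ j, p j = ∏ κ : Fin (m j),
      (MvPolynomial.X j - MvPolynomial.C (ξ j κ)) ^ ν j κ)
    (d : Fin n → ℕ) (hd : ∀ j, d j = ∑ κ : Fin (m j), ν j κ)
    (U : Set (Fin n → ℂ))
    (hZU : ∀ κ : ∀ j, Fin (m j), (fun j => ξ j (κ j)) ∈ U)
    (a : (∀ j, Fin (m j)) → (Fin n → ℕ) → ℂ)
    (ha : ∃ κ : ∀ j, Fin (m j), ∃ ℓ : Fin n → ℕ,
      (∀ j, ℓ j < ν j (κ j)) ∧ a κ ℓ ≠ 0)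
    (c : ℂ) :
    (∃ L : MvPolynomial (Fin n) ℂ,
        (∀ j, MvPolynomial.degreeOf j L ≤ d j - 1) ∧
        interpSum m ξ ν a (fun s => MvPolynomial.eval s L) ≠ 0) ∧
    (∀ f : (Fin n → ℂ) → ℂ, AnalyticOnNhd ℂ f U →
      ∀ L : MvPolynomial (Fin n) ℂ,
        (∀ j, MvPolynomial.degreeOf j L ≤ d j - 1) →
        MemLocalIdeal U p (fun s => f s - MvPolynomial.eval s L) →
        (interpSum m ξ ν a f = c ↔
          interpSum m ξ ν a (fun s => MvPolynomial.eval s L) = c)) ∧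
    (∃ f : (Fin n → ℂ) → ℂ, AnalyticOnNhd ℂ f U ∧ interpSum m ξ ν a f = c) := by
  obtain ⟨L, hLdeg, hL⟩ := exists_interpSum_eval_ne_zero hξ ha
  refine ⟨⟨L, fun j => hd j ▸ hLdeg j, hL⟩, fun f hf L' _ hfL' => ?_, ?_⟩
  · rw [interpSum_eq_of_memLocalIdeal a hp hZU hf (fun x _ => analyticAt_eval L' x) hfL']
  · refine ⟨fun s => c / interpSum m ξ ν a (fun s => eval s L) * eval s L,
      fun x _ => analyticAt_const.mul (analyticAt_eval L x), ?_⟩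
    rw [interpSum_const_mul, div_mul_cancel₀ c hL]

theorem stmt15 {n : ℕ} (m : Fin n → ℕ) (hm : ∀ j, 0 < m j)
    (ξ : ∀ j, Fin (m j) → ℂ) (hξ : ∀ j, Function.Injective (ξ j))
    (ν : ∀ j, Fin (m j) → ℕ) (hν : ∀ j κ, 1 ≤ ν j κ)
    (p : Fin n → MvPolynomial (Fin n) ℂ)
    (hp : ∀ j, p j = ∏ κ : Fin (m j),
      (MvPolynomial.X j - MvPolynomial.C (ξ j κ)) ^ ν j κ)
    (d : Fin n → ℕ) (hd : ∀ j, d j = ∑ κ : Fin (m j), ν j κ)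
    (U : Set (Fin n → ℂ)) (hU : IsOpen U)
    (hZU : ∀ κ : ∀ j, Fin (m j), (fun j => ξ j (κ j)) ∈ U)
    (a : (∀ j, Fin (m j)) → (Fin n → ℕ) → ℂ)
    (ha : ∃ κ : ∀ j, Fin (m j), ∃ ℓ : Fin n → ℕ,
      (∀ j, ℓ j < ν j (κ j)) ∧ a κ ℓ ≠ 0)
    (c : ℂ) :
    (∃ L : MvPolynomial (Fin n) ℂ,
        (∀ j, MvPolynomial.degreeOf j L ≤ d j - 1) ∧
        interpSum m ξ ν a (fun s => MvPolynomial.eval s L) ≠ 0) ∧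
    (∀ f : (Fin n → ℂ) → ℂ, AnalyticOnNhd ℂ f U →
      ∀ L : MvPolynomial (Fin n) ℂ,
        (∀ j, MvPolynomial.degreeOf j L ≤ d j - 1) →
        MemLocalIdeal U p (fun s => f s - MvPolynomial.eval s L) →
        (interpSum m ξ ν a f = c ↔
          interpSum m ξ ν a (fun s => MvPolynomial.eval s L) = c)) ∧
    (∃ f : (Fin n → ℂ) → ℂ, AnalyticOnNhd ℂ f U ∧ interpSum m ξ ν a f = c) :=
  stmt15_general m ξ hξ ν p hp d hd U hZU a ha c
end
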